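/- If there exists a surjective γ-Lipschitz map Φ from the unit ball B_{Y_n} of an n-dimensional normed space onto the unit ball B_{Z_m} of an m-dimensional normed space, then n ≥ m. -/

import Mathlib

open Metric Set Filter

variable {X : Type*} [NormedAddCommGroup X] [NormedSpace ℝ X] [CompleteSpace X]

/-- `N` is a norm on `ℝ^k`. -/
def IsNorm {k : ℕ} (N : (Fin k → ℝ) → ℝ) : Prop :=
  (∀ y, 0 ≤ N y) ∧ (∀ y, N y = 0 → y = 0) ∧
    (∀ (c : ℝ) (y), N (c • y) = |c| * N y) ∧ ∀ y z, N (y + z) ≤ N y + N z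

/-- `Φ` is `γ`-Lipschitz on the unit ball of the norm `N`. -/
def LipOnBall {k : ℕ} (N : (Fin k → ℝ) → ℝ) (γ : ℝ) (Φ : (Fin k → ℝ) → X) : Prop :=
  ∀ y y', N y ≤ 1 → N y' ≤ 1 → ‖Φ y - Φ y'‖ ≤ γ * N (y - y')

/-- `sup_{f ∈ K} inf_{‖y‖_N ≤ 1} ‖f - Φ y‖`. -/
noncomputable def approxErr (K : Set X) {k : ℕ} (N : (Fin k → ℝ) → ℝ)
    (Φ : (Fin k → ℝ) → X) : ℝ :=
  ⨆ f ∈ K, ⨅ y ∈ {y | N y ≤ 1}, ‖f - Φ y‖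

/-- The fixed Lipschitz width `d^γ(K, Y_k)_X` for the norm `N` on `ℝ^k`. -/
noncomputable def fixedLipWidth (K : Set X) {k : ℕ} (N : (Fin k → ℝ) → ℝ) (γ : ℝ) : ℝ :=
  sInf { e | ∃ Φ : (Fin k → ℝ) → X, LipOnBall N γ Φ ∧ e = approxErr K N Φ }

/-- The Lipschitz width `d_n^γ(K)_X`. -/
noncomputable def lipWidth (K : Set X) (n : ℕ) (γ : ℝ) : ℝ :=
  sInf { e | ∃ k, 1 ≤ k ∧ k ≤ n ∧
    ∃ N : (Fin k → ℝ) → ℝ, IsNorm N ∧ e = fixedLipWidth K N γ }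

/-- The Chebyshev radius `rad(K) = inf_{g ∈ X} sup_{f ∈ K} ‖f - g‖`. -/
noncomputable def chebRadius (K : Set X) : ℝ := ⨅ g : X, ⨆ f ∈ K, ‖f - g‖

/-- The entropy number `ε_n(K)_X`. -/
noncomputable def entropyNum (K : Set X) (n : ℕ) : ℝ :=
  sInf { ε | 0 < ε ∧ ∃ T : Finset X, T.card ≤ 2 ^ n ∧ K ⊆ ⋃ g ∈ T, closedBall g ε }

/-- The inner entropy number `ε̃_n(K)_X` (centers in `K`). -/
noncomputable def innerEntropyNum (K : Set X) (n : ℕ) : ℝ :=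
  sInf { ε | 0 < ε ∧ ∃ T : Finset X, ↑T ⊆ K ∧ T.card ≤ 2 ^ n ∧ K ⊆ ⋃ g ∈ T, closedBall g ε }

/-- The minimal `δ`-covering number `N_δ(K)`. -/
noncomputable def coveringNumber (K : Set X) (δ : ℝ) : ℕ :=
  sInf { m | ∃ T : Finset X, T.card = m ∧ K ⊆ ⋃ g ∈ T, closedBall g δ }

/-!
A norm on `ℝ^k` is squeezed between two multiples of the sup norm, so `Φ` is Lipschitz for
the sup norms on the unit ball of `N`. Lipschitz maps do not increase Hausdorff dimension, so
`dimH (Φ '' B_N) ≤ n`; but `Φ '' B_N = B_M` is a neighbourhood of `0` in `ℝ^m`, of Hausdorff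
dimension `m`.
-/

open scoped Topology

theorem Module.finrank_le_of_lipschitzOnWith_image_mem_nhds
    {E F : Type*} [NormedAddCommGroup E] [NormedSpace ℝ E] [FiniteDimensional ℝ E]
    [NormedAddCommGroup F] [NormedSpace ℝ F] [FiniteDimensional ℝ F]
    {K : NNReal} {f : E → F} {s : Set E} (hf : LipschitzOnWith K f s) {x : F}
    (hs : f '' s ∈ 𝓝 x) :
    Module.finrank ℝ F ≤ Module.finrank ℝ E := by
  have : (Module.finrank ℝ F : ENNReal) ≤ Module.finrank ℝ E :=
    calc (Module.finrank ℝ F : ENNReal) = dimH (f '' s) := (Real.dimH_of_mem_nhds hs).symm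
      _ ≤ dimH s := hf.dimH_image_le
      _ ≤ dimH (univ : Set E) := dimH_mono (subset_univ s)
      _ = Module.finrank ℝ E := Real.dimH_univ_eq_finrank E
  exact_mod_cast this

namespace IsNorm

variable {k : ℕ} {N : (Fin k → ℝ) → ℝ}

theorem map_zero (hN : IsNorm N) : N 0 = 0 := by
  simpa using hN.2.2.1 0 0

theorem exists_le_mul_norm (hN : IsNorm N) : ∃ C : ℝ, ∀ y, N y ≤ C * ‖y‖ := by
  classical
  have ⟨hnonneg, _, hsmul, hadd⟩ := hN
  refine ⟨∑ i, N (Pi.single i 1), fun y => ?_⟩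
  calc N y = N (∑ i, y i • Pi.single i 1) := by rw [← pi_eq_sum_univ' y]
    _ ≤ ∑ i, N (y i • Pi.single i 1) :=
        Finset.le_sum_of_subadditive N hN.map_zero.le hadd _ _
    _ = ∑ i, |y i| * N (Pi.single i 1) := by simp only [hsmul]
    _ ≤ ∑ i, ‖y‖ * N (Pi.single i 1) := by
        gcongr with i
        · exact hnonneg _
        · exact norm_le_pi_norm y i
    _ = (∑ i, N (Pi.single i 1)) * ‖y‖ := by rw [Finset.sum_mul]; simp only [mul_comm]

theorem continuous (hN : IsNorm N) : Continuous N := by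
  obtain ⟨C, hC⟩ := hN.exists_le_mul_norm
  refine (LipschitzWith.of_le_add_mul' C fun y z => ?_).continuous
  calc N y = N ((y - z) + z) := by rw [sub_add_cancel]
    _ ≤ N (y - z) + N z := hN.2.2.2 _ _
    _ ≤ N z + C * dist y z := by rw [dist_eq_norm]; linarith [hC (y - z)]

theorem exists_pos_mul_norm_le (hN : IsNorm N) : ∃ c > 0, ∀ y, c * ‖y‖ ≤ N y := by
  have ⟨hnonneg, hdef, hsmul, _⟩ := hN
  -- `N` attains a positive minimum on the compact unit sphere of the sup norm.
  obtain ⟨c, hc, hmin⟩ := (isCompact_sphere (0 : Fin k → ℝ) 1).exists_forall_le'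
    hN.continuous.continuousOn (a := 0) fun u hu =>
      (hnonneg u).lt_of_ne fun h => by simp [hdef u h.symm] at hu
  refine ⟨c, hc, fun y => ?_⟩
  rcases eq_or_ne y 0 with rfl | hy
  · simp [hN.map_zero]
  have hy' : 0 < ‖y‖ := norm_pos_iff.2 hy
  have hu : ‖y‖⁻¹ • y ∈ sphere (0 : Fin k → ℝ) 1 := by
    simp [norm_smul, inv_mul_cancel₀ hy'.ne']
  calc c * ‖y‖ ≤ N (‖y‖⁻¹ • y) * ‖y‖ := by gcongr; exact hmin _ hu
    _ = N y := by rw [hsmul, abs_of_pos (inv_pos.2 hy')]; field_simp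

theorem setOf_le_one_mem_nhds (hN : IsNorm N) : {y | N y ≤ 1} ∈ 𝓝 0 :=
  hN.continuous.continuousAt.preimage_mem_nhds (Iic_mem_nhds (hN.map_zero ▸ one_pos))

end IsNorm

theorem IsNorm.exists_lipschitzOnWith {n m : ℕ} {N : (Fin n → ℝ) → ℝ} {M : (Fin m → ℝ) → ℝ}
    (hN : IsNorm N) (hM : IsNorm M) {γ : ℝ} {Φ : (Fin n → ℝ) → (Fin m → ℝ)} {s : Set (Fin n → ℝ)}
    (hΦ : ∀ y ∈ s, ∀ y' ∈ s, M (Φ y - Φ y') ≤ γ * N (y - y')) :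
    ∃ K, LipschitzOnWith K Φ s := by
  obtain ⟨C, hC⟩ := hN.exists_le_mul_norm
  obtain ⟨c, hc, hcM⟩ := hM.exists_pos_mul_norm_le
  refine ⟨(γ.toNNReal * C / c).toNNReal, LipschitzOnWith.of_dist_le_mul fun y hy y' hy' => ?_⟩
  rw [dist_eq_norm, dist_eq_norm]
  calc ‖Φ y - Φ y'‖ ≤ M (Φ y - Φ y') / c := (le_div_iff₀' hc).2 (hcM _)
    _ ≤ γ * N (y - y') / c := by gcongr; exact hΦ y hy y' hy'
    _ ≤ γ.toNNReal * (C * ‖y - y'‖) / c := by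
        refine div_le_div_of_nonneg_right ?_ hc.le
        exact mul_le_mul (Real.le_coe_toNNReal γ) (hC _) (hN.1 _) γ.toNNReal.coe_nonneg
    _ = γ.toNNReal * C / c * ‖y - y'‖ := by ring
    _ ≤ (γ.toNNReal * C / c).toNNReal * ‖y - y'‖ := by gcongr; exact Real.le_coe_toNNReal _

theorem stmt8_general {n m : ℕ}
    (N : (Fin n → ℝ) → ℝ) (hN : IsNorm N) (M : (Fin m → ℝ) → ℝ) (hM : IsNorm M)
    (γ : ℝ) (Φ : (Fin n → ℝ) → (Fin m → ℝ))
    (hlip : ∀ y y', N y ≤ 1 → N y' ≤ 1 → M (Φ y - Φ y') ≤ γ * N (y - y'))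
    (hsurj : Φ '' {y | N y ≤ 1} = {z | M z ≤ 1}) :
    m ≤ n := by
  obtain ⟨K, hK⟩ := hN.exists_lipschitzOnWith hM fun y hy y' hy' => hlip y y' hy hy'
  have hball : Φ '' {y | N y ≤ 1} ∈ 𝓝 0 := hsurj ▸ hM.setOf_le_one_mem_nhds
  simpa using Module.finrank_le_of_lipschitzOnWith_image_mem_nhds hK hball

/-- if there is a surjective `γ`-Lipschitz map from the unit ball of an
`n`-dimensional normed space onto the unit ball of an `m`-dimensional normed space,
then `n ≥ m`. -/
theorem stmt8 {n m : ℕ} (hn : 1 ≤ n) (hm : 1 ≤ m)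
    (N : (Fin n → ℝ) → ℝ) (hN : IsNorm N) (M : (Fin m → ℝ) → ℝ) (hM : IsNorm M)
    (γ : ℝ) (hγ : 0 ≤ γ) (Φ : (Fin n → ℝ) → (Fin m → ℝ))
    (hlip : ∀ y y', N y ≤ 1 → N y' ≤ 1 → M (Φ y - Φ y') ≤ γ * N (y - y'))
    (hsurj : Φ '' {y | N y ≤ 1} = {z | M z ≤ 1}) :
    m ≤ n :=
  stmt8_general N hN M hM γ Φ hlip hsurj
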